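/- arXiv:2308.07152 — 3 statements merged into one kernel-verified Lean document; each statement's English description precedes it below -/
import Mathlib

section
/- If C ⊆ F₂^m is a weakly self-dual code (C ⊆ C⊥) spanned by pairwise orthogonal even-weight vectors c₁,...,c_d, and at least one cᵢ has Hamming weight ≡ 2 (mod 4), then exactly half of the codewords of C have weight ≡ 0 (mod 4) and half have weight ≡ 2 (mod 4). -/
/-!
For binary vectors `|x + y| = |x| + |y| - 2k`, where `k` is the size of the common support and
`k ≡ x ⬝ᵥ y (mod 2)`. So if `v` is a codeword of weight `≡ 2 (mod 4)`, orthogonal to the whole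
code, translation by `v` is an involution of the code exchanging the two weight classes.
-/

open Finset

variable {ι : Type*} [Fintype ι]

lemma hammingNorm_zmod_two_eq_sum_val (x : ι → ZMod 2) : hammingNorm x = ∑ i, (x i).val := by
  have hval : ∀ a : ZMod 2, a.val = if a ≠ 0 then 1 else 0 := by decide
  simp only [hammingNorm, card_filter, hval]

lemma natCast_sum_val_mul_eq_dotProduct (x y : ι → ZMod 2) :
    ((∑ i, (x i * y i).val : ℕ) : ZMod 2) = x ⬝ᵥ y := by
  simp only [Nat.cast_sum, ZMod.natCast_zmod_val, dotProduct]

lemma hammingNorm_add_add_two_mul_sum_val_mul (x y : ι → ZMod 2) :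
    hammingNorm (x + y) + 2 * ∑ i, (x i * y i).val = hammingNorm x + hammingNorm y := by
  have hpoint : ∀ a b : ZMod 2, (a + b).val + 2 * (a * b).val = a.val + b.val := by decide
  simp only [hammingNorm_zmod_two_eq_sum_val, mul_sum, ← sum_add_distrib, Pi.add_apply, hpoint]

lemma hammingNorm_add_mod_four_of_dotProduct_eq_zero {x y : ι → ZMod 2}
    (h : x ⬝ᵥ y = 0) :
    hammingNorm (x + y) % 4 = (hammingNorm x + hammingNorm y) % 4 := by
  have hcommon : 2 ∣ ∑ i, (x i * y i).val := by
    rw [← ZMod.natCast_eq_zero_iff, natCast_sum_val_mul_eq_dotProduct, h]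
  have := hammingNorm_add_add_two_mul_sum_val_mul x y
  omega

lemma Submodule.ncard_hammingNorm_mod_four_eq_zero_eq_two (C : Submodule (ZMod 2) (ι → ZMod 2))
    {v : ι → ZMod 2} (hv : v ∈ C) (horth : ∀ x ∈ C, x ⬝ᵥ v = 0) (hv2 : hammingNorm v % 4 = 2) :
    {x | x ∈ C ∧ hammingNorm x % 4 = 0}.ncard = {x | x ∈ C ∧ hammingNorm x % 4 = 2}.ncard := by
  have htranslate : (· + v) '' {x | x ∈ C ∧ hammingNorm x % 4 = 0} =
      {x | x ∈ C ∧ hammingNorm x % 4 = 2} := by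
    ext y
    rw [Set.image_add_right, ZModModule.neg_eq_self]
    simp only [Set.mem_preimage, Set.mem_ofPred_eq, C.add_mem_iff_left hv]
    refine and_congr_right fun hy => ?_
    have := hammingNorm_add_mod_four_of_dotProduct_eq_zero (horth y hy)
    omega
  rw [← htranslate, Set.ncard_image_of_injective _ (add_left_injective v)]

theorem unbiased_even_code_split_general (m d : ℕ) (c : Fin d → (Fin m → ZMod 2))
    (C : Submodule (ZMod 2) (Fin m → ZMod 2))
    (hC : C = Submodule.span (ZMod 2) (Set.range c))
    (hsd : ∀ x ∈ C, ∀ y ∈ C, dotProduct x y = 0)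
    (hbias : ∃ i, hammingNorm (c i) % 4 = 2) :
    {x : Fin m → ZMod 2 | x ∈ C ∧ hammingNorm x % 4 = 0}.ncard =
      {x : Fin m → ZMod 2 | x ∈ C ∧ hammingNorm x % 4 = 2}.ncard := by
  obtain ⟨i, hi⟩ := hbias
  have hci : c i ∈ C := hC ▸ Submodule.subset_span ⟨i, rfl⟩
  exact C.ncard_hammingNorm_mod_four_eq_zero_eq_two hci (fun x hx => hsd x hx _ hci) hi

/-- If `C ⊆ F₂^m` is a weakly self-dual code (`C ⊆ C⊥`) spanned by
pairwise orthogonal even-weight vectors `c₁, …, c_d`, and at least one `cᵢ` has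
Hamming weight `≡ 2 (mod 4)`, then exactly half of the codewords of `C` have weight
`≡ 0 (mod 4)` and half have weight `≡ 2 (mod 4)`. -/
theorem unbiased_even_code_split (m d : ℕ) (c : Fin d → (Fin m → ZMod 2))
    (C : Submodule (ZMod 2) (Fin m → ZMod 2))
    (hC : C = Submodule.span (ZMod 2) (Set.range c))
    (hsd : ∀ x ∈ C, ∀ y ∈ C, dotProduct x y = 0)
    (horth : ∀ i j, i ≠ j → dotProduct (c i) (c j) = 0)
    (heven : ∀ i, Even (hammingNorm (c i)))
    (hbias : ∃ i, hammingNorm (c i) % 4 = 2) :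
    {x : Fin m → ZMod 2 | x ∈ C ∧ hammingNorm x % 4 = 0}.ncard =
      {x : Fin m → ZMod 2 | x ∈ C ∧ hammingNorm x % 4 = 2}.ncard :=
  unbiased_even_code_split_general m d c C hC hsd hbias
end

section
/- Let H be an m×n matrix over F₂ with Gram matrix G = Hᵀ H. Let C ⊆ F₂^m be the column space of H, C⊥ its dual code, and D = C ∩ C⊥. Then rank(G) = dim(C) − dim(D). -/
/-- The dual code of a binary linear code `C ⊆ F₂^m`:
`C⊥ = {v : v · w = 0 for all w ∈ C}`. -/
def dualCode {m : ℕ} (C : Submodule (ZMod 2) (Fin m → ZMod 2)) :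
    Submodule (ZMod 2) (Fin m → ZMod 2) where
  carrier := {v | ∀ w ∈ C, dotProduct v w = 0}
  add_mem' := by
    intro a b ha hb w hw
    simp only [Set.mem_setOf_eq] at *
    rw [add_dotProduct, ha w hw, hb w hw, add_zero]
  zero_mem' := by
    intro w _
    exact zero_dotProduct w
  smul_mem' := by
    intro r a ha w hw
    simp only [Set.mem_setOf_eq] at *
    rw [smul_dotProduct, ha w hw, smul_zero]

/-! The Gram map `Hᵀ H` factors through `C`, so `rank G = dim Hᵀ(C)`. The kernel of
`Hᵀ` is exactly `C⊥`, and rank–nullity for `Hᵀ` restricted to `C` gives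
`dim Hᵀ(C) + dim (C ∩ C⊥) = dim C`. -/

open Matrix

theorem Submodule.finrank_map_add_finrank_inf_ker {K V W : Type*} [DivisionRing K]
    [AddCommGroup V] [Module K V] [AddCommGroup W] [Module K W] [FiniteDimensional K V]
    (f : V →ₗ[K] W) (p : Submodule K V) :
    Module.finrank K (p.map f) + Module.finrank K ↥(p ⊓ LinearMap.ker f) =
      Module.finrank K p := by
  have hker : Module.finrank K (LinearMap.ker (f.domRestrict p)) =
      Module.finrank K ↥(p ⊓ LinearMap.ker f) := by
    rw [LinearMap.ker_domRestrict, ← Submodule.finrank_map_subtype_eq,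
      Submodule.map_comap_subtype]
  rw [← hker, ← LinearMap.range_domRestrict]
  exact (f.domRestrict p).finrank_range_add_finrank_ker

theorem Matrix.rank_transpose_mul_self_eq_finrank_map {R : Type*} {m n : Type*} [CommRing R]
    [Fintype m] [Fintype n] [DecidableEq n] (H : Matrix m n R) :
    (Hᵀ * H).rank = Module.finrank R (H.mulVecLin.range.map Hᵀ.mulVecLin) := by
  rw [Matrix.rank, Matrix.mulVecLin_mul, LinearMap.range_comp]

theorem mem_dualCode {m : ℕ} {C : Submodule (ZMod 2) (Fin m → ZMod 2)} {v : Fin m → ZMod 2} :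
    v ∈ dualCode C ↔ ∀ w ∈ C, v ⬝ᵥ w = 0 :=
  Iff.rfl

theorem ker_mulVecLin_transpose_eq_dualCode {m n : ℕ} (H : Matrix (Fin m) (Fin n) (ZMod 2)) :
    LinearMap.ker Hᵀ.mulVecLin = dualCode (LinearMap.range H.mulVecLin) := by
  ext v
  simp only [LinearMap.mem_ker, mem_dualCode, LinearMap.mem_range, forall_exists_index,
    forall_apply_eq_imp_iff, mulVecLin_apply, dotProduct_mulVec, mulVec_transpose,
    dotProduct_eq_zero_iff]

/-- Let `H` be an `m×n` matrix over `F₂` with Gram matrix `G = Hᵀ H`.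
Let `C` be the column space of `H`, `C⊥` its dual code, and `D = C ∩ C⊥`.
Then `rank G = dim C − dim D`. -/
theorem rank_gram_eq_dim_sub (m n : ℕ) (H : Matrix (Fin m) (Fin n) (ZMod 2)) :
    (H.transpose * H).rank =
      Module.finrank (ZMod 2) ↥(LinearMap.range H.mulVecLin) -
        Module.finrank (ZMod 2)
          ↥(LinearMap.range H.mulVecLin ⊓ dualCode (LinearMap.range H.mulVecLin)) := by
  have rank_nullity := (LinearMap.range H.mulVecLin).finrank_map_add_finrank_inf_ker Hᵀ.mulVecLin
  rw [ker_mulVecLin_transpose_eq_dualCode] at rank_nullity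
  rw [rank_transpose_mul_self_eq_finrank_map]
  omega
end

section
/- Let H be an m×n matrix over F₂ with no zero rows, and let C⊥ = {a ∈ F₂^m : aᵀ H = 0} be the dual of its column space. Then ⟨0^n| ∏_{p ∈ rows(H)} (1/√2)(I + i X_p) |0^n⟩ = 2^{−m/2} Σ_{a ∈ C⊥} i^{|a|}, where X_p = X^{p₁} ⊗ ... ⊗ X^{p_n} and |a| is the Hamming weight of a. -/
/-- The `n`-qubit operator `X_p = X^{p₁} ⊗ ⋯ ⊗ X^{p_n}` for `p ∈ F₂^n`, acting on
the computational basis indexed by `Fin n → ZMod 2` by `|x⟩ ↦ |x + p⟩`. -/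
def Xp (n : ℕ) (p : Fin n → ZMod 2) :
    Matrix (Fin n → ZMod 2) (Fin n → ZMod 2) ℂ :=
  Matrix.of fun x y => if y = x + p then 1 else 0

lemma Xp_mul (n : ℕ) (p q : Fin n → ZMod 2) : Xp n p * Xp n q = Xp n (p + q) := by
  ext x y
  simp only [Xp, Matrix.mul_apply, Matrix.of_apply, ite_mul, one_mul, zero_mul]
  rw [Finset.sum_ite_eq' Finset.univ (x + p)]
  simp [add_assoc]

lemma Xp_zero (n : ℕ) : Xp n 0 = 1 := by
  ext x y
  simp [Xp, Matrix.one_apply, eq_comm]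

lemma zmod2_sum {M : Type*} [AddCommMonoid M] (f : ZMod 2 → M) :
    ∑ x : ZMod 2, f x = f 0 + f 1 := by
  have h : (Finset.univ : Finset (ZMod 2)) = {0, 1} := by decide
  rw [h, Finset.sum_insert (by decide), Finset.sum_singleton]

lemma hammingNorm_cons (m : ℕ) (x : ZMod 2) (a : Fin m → ZMod 2) :
    hammingNorm (Fin.cons x a : Fin (m+1) → ZMod 2) =
      (if x ≠ 0 then 1 else 0) + hammingNorm a := by
  simp only [hammingNorm, Finset.card_filter, Fin.sum_univ_succ, Fin.cons_zero, Fin.cons_succ]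

lemma vecMul_cons (m n : ℕ) (x : ZMod 2) (a : Fin m → ZMod 2)
    (H : Matrix (Fin (m+1)) (Fin n) (ZMod 2)) :
    Matrix.vecMul (Fin.cons x a) H =
      x • H 0 + Matrix.vecMul a (fun i => H i.succ) := by
  ext j
  simp [Matrix.vecMul, dotProduct, Fin.sum_univ_succ]

lemma key (m n : ℕ) (H : Matrix (Fin m) (Fin n) (ZMod 2)) :
    (List.ofFn fun i : Fin m =>
        ((1 : Matrix (Fin n → ZMod 2) (Fin n → ZMod 2) ℂ) + Complex.I • Xp n (H i))).prod =
    ∑ a : Fin m → ZMod 2, (Complex.I ^ hammingNorm a) • Xp n (Matrix.vecMul a H) := by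
  induction m with
  | zero =>
    have h0 : ∀ a : Fin 0 → ZMod 2, Matrix.vecMul a H = 0 := by
      intro a; ext j; simp [Matrix.vecMul, dotProduct]
    have h1 : ∀ a : Fin 0 → ZMod 2, hammingNorm a = 0 := by
      intro a; simp [hammingNorm]
    simp [h0, h1, Xp_zero]
  | succ m ih =>
    rw [List.ofFn_succ, List.prod_cons, ih (fun i => H i.succ)]
    rw [← (Fin.consEquiv (fun _ : Fin (m+1) => ZMod 2)).sum_comp, Fintype.sum_prod_type]
    rw [zmod2_sum]
    simp only [Fin.consEquiv, Equiv.coe_fn_mk, hammingNorm_cons, vecMul_cons, zero_smul, zero_add,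
      one_smul]
    norm_num
    rw [add_mul, one_mul, Finset.mul_sum]
    congr 1
    refine Finset.sum_congr rfl fun a _ => ?_
    rw [smul_mul_assoc, mul_smul_comm, smul_smul, Xp_mul, pow_add, pow_one]

lemma smul_prod (m n : ℕ) (c : ℂ) (f : Fin m → Matrix (Fin n → ZMod 2) (Fin n → ZMod 2) ℂ) :
    (List.ofFn fun i => c • f i).prod = c ^ m • (List.ofFn f).prod := by
  induction m with
  | zero => simp
  | succ m ih =>
    rw [List.ofFn_succ, List.ofFn_succ, List.prod_cons, List.prod_cons, ih (fun i => f i.succ)]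
    rw [smul_mul_assoc, mul_smul_comm, smul_smul, pow_succ, mul_comm]

/-- Let `H` be an `m×n` matrix over `F₂` with no zero rows, and
`C⊥ = {a ∈ F₂^m : aᵀ H = 0}` the dual of its column space.  Then
`⟨0^n| ∏_{p ∈ rows(H)} (1/√2)(I + i X_p) |0^n⟩ = 2^{−m/2} Σ_{a ∈ C⊥} i^{|a|}`. -/
theorem iqp_amplitude_formula (m n : ℕ) (H : Matrix (Fin m) (Fin n) (ZMod 2))
    (hrows : ∀ i, H i ≠ 0) :
    (List.ofFn fun i : Fin m =>
        (1 / (Real.sqrt 2 : ℂ)) • ((1 : Matrix (Fin n → ZMod 2) (Fin n → ZMod 2) ℂ) +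
          Complex.I • Xp n (H i))).prod 0 0 =
      (1 / (Real.sqrt 2 : ℂ)) ^ m *
        ∑ a ∈ Finset.univ.filter (fun a : Fin m → ZMod 2 => Matrix.vecMul a H = 0),
          Complex.I ^ hammingNorm a := by
  rw [smul_prod m n _ (fun i => 1 + Complex.I • Xp n (H i)), key m n H]
  simp only [Matrix.smul_apply, Matrix.sum_apply, smul_eq_mul]
  congr 1
  rw [Finset.sum_filter]
  refine Finset.sum_congr rfl fun a _ => ?_
  by_cases h : Matrix.vecMul a H = 0 <;> simp [Xp, h, eq_comm]
end
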